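/- For any m₀ ≥ 0, Φ_{m₀}(x) = Σ_{m=m₀}^∞ Φ_m(φ(x)), where Φ_m(x) = Σ_{k=0}^m (-1)^k C(m,k) φ^{∘k}(x) and the series converges coefficientwise in F[[x]]. -/

import Mathlib

/-! With `C f = f ∘ φ`, which is linear in `f`, the binomial theorem gives `Φ_m = (1 - C)^m X`,
hence `Φ_m ∘ φ = Φ_m - Φ_{m+1}` and the series telescopes. The remainder `Φ_{M+1}` vanishes
because `X^{m+1} ∣ Φ_m`: as `φ = X + O(X²)`, the difference `f - f ∘ φ` has order one more
than `f`. -/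

open PowerSeries

/-- Composition `f ∘ g` of formal power series in one variable (intended for `g` with zero
constant term): the coefficient of `X^d` only involves `(coeff k f)` for `k ≤ d`. -/
noncomputable def PowerSeries.compose {F : Type*} [CommRing F] (f g : PowerSeries F) :
    PowerSeries F :=
  PowerSeries.mk fun d => ∑ k ∈ Finset.range (d + 1), coeff k f * coeff d (g ^ k)

/-- `k`-fold compositional iterate `φ^{∘k}`, with `φ^{∘0} = id = X`. -/
noncomputable def PowerSeries.iterComp {F : Type*} [CommRing F] (φ : PowerSeries F) :
    ℕ → PowerSeries F
  | 0 => PowerSeries.X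
  | k + 1 => PowerSeries.compose (PowerSeries.iterComp φ k) φ

/-- `Φ_m = ∑_{k=0}^m (-1)^k C(m,k) φ^{∘k}`. -/
noncomputable def PowerSeries.Phi {F : Type*} [CommRing F] (φ : PowerSeries F) (m : ℕ) :
    PowerSeries F :=
  ∑ k ∈ Finset.range (m + 1), ((-1 : F) ^ k * (m.choose k : F)) • PowerSeries.iterComp φ k

lemma eq_zero_of_succ_eq_of_eventually_eq_zero {α : Type*} [Zero α] {f : ℕ → α} {N K : ℕ}
    (hsucc : ∀ n ≥ N, f (n + 1) = f n) (hzero : ∀ n ≥ K, f n = 0) {n : ℕ} (hn : N ≤ n) :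
    f n = 0 := by
  have hconst : ∀ j, f (n + j) = f n := fun j => by
    induction j with
    | zero => rfl
    | succ j ih => rw [← add_assoc, hsucc _ (by omega), ih]
  rw [← hconst K, hzero _ (by omega)]

lemma eq_sum_Icc_sub_succ {G : Type*} [AddCommGroup G] {f : ℕ → G} {M : ℕ}
    (hf : ∀ m > M, f m = 0) (m₀ : ℕ) : f m₀ = ∑ m ∈ Finset.Icc m₀ M, (f m - f (m + 1)) := by
  rcases le_or_gt m₀ M with h | h
  · rw [Finset.sum_congr rfl fun m _ => (neg_sub (f (m + 1)) (f m)).symm,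
      Finset.sum_neg_distrib, Finset.sum_Icc_sub h, hf (M + 1) (by omega), zero_sub, neg_neg]
  · rw [Finset.Icc_eq_empty_of_lt h, Finset.sum_empty, hf m₀ h]

namespace PowerSeries

variable {F : Type*} [CommRing F]

lemma coeff_compose (f g : PowerSeries F) (d : ℕ) :
    coeff d (compose f g) = ∑ k ∈ Finset.range (d + 1), coeff k f * coeff d (g ^ k) :=
  coeff_mk _ _

noncomputable def composeRight (g : PowerSeries F) : PowerSeries F →ₗ[F] PowerSeries F where
  toFun f := compose f g
  map_add' f h := by ext d; simp [coeff_compose, add_mul, Finset.sum_add_distrib]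
  map_smul' c f := by ext d; simp [coeff_compose, Finset.mul_sum, mul_assoc]

lemma iterComp_eq_pow_apply (φ : PowerSeries F) (k : ℕ) :
    iterComp φ k = (composeRight φ ^ k) X := by
  induction k with
  | zero => rfl
  | succ k ih => rw [pow_succ', Module.End.mul_apply, ← ih]; rfl

lemma Phi_eq_one_sub_pow_apply (φ : PowerSeries F) (m : ℕ) :
    Phi φ m = ((1 - composeRight φ) ^ m) X := by
  rw [sub_eq_neg_add, ← neg_one_smul F (composeRight φ), (Commute.one_right _).add_pow, Phi,
    LinearMap.sum_apply]
  refine Finset.sum_congr rfl fun k _ => ?_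
  rw [smul_pow, one_pow, mul_one, smul_mul_assoc, LinearMap.smul_apply, Module.End.mul_apply,
    Module.End.natCast_apply, map_nsmul, iterComp_eq_pow_apply, mul_smul, Nat.cast_smul_eq_nsmul]

lemma Phi_succ (φ : PowerSeries F) (m : ℕ) :
    Phi φ (m + 1) = Phi φ m - compose (Phi φ m) φ := by
  rw [Phi_eq_one_sub_pow_apply, pow_succ', Module.End.mul_apply, ← Phi_eq_one_sub_pow_apply]
  rfl

lemma coeff_pow_self_of_constantCoeff_eq_zero {g : PowerSeries F} (hg : constantCoeff g = 0)
    (n : ℕ) : coeff n (g ^ n) = coeff 1 g ^ n := by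
  obtain ⟨h, rfl⟩ := X_dvd_iff.mpr hg
  rw [mul_pow, coeff_X_pow_mul', if_pos le_rfl, Nat.sub_self, coeff_zero_eq_constantCoeff,
    map_pow, coeff_succ_X_mul, coeff_zero_eq_constantCoeff]

lemma X_pow_dvd_compose {f : PowerSeries F} {n : ℕ} (hf : X ^ n ∣ f) (g : PowerSeries F) :
    X ^ n ∣ compose f g := by
  refine X_pow_dvd_iff.mpr fun d hd => ?_
  rw [coeff_compose]
  refine Finset.sum_eq_zero fun k hk => ?_
  rw [X_pow_dvd_iff.mp hf k (by rw [Finset.mem_range] at hk; omega), zero_mul]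

lemma coeff_compose_of_X_pow_dvd {f g : PowerSeries F} (hg : constantCoeff g = 0) {n : ℕ}
    (hf : X ^ n ∣ f) : coeff n (compose f g) = coeff n f * coeff 1 g ^ n := by
  rw [coeff_compose, Finset.sum_range_succ, coeff_pow_self_of_constantCoeff_eq_zero hg,
    Finset.sum_eq_zero, zero_add]
  intro k hk
  rw [X_pow_dvd_iff.mp hf k (Finset.mem_range.mp hk), zero_mul]

lemma X_pow_succ_dvd_sub_compose {f g : PowerSeries F} (hg₀ : constantCoeff g = 0)
    (hg₁ : coeff 1 g = 1) {n : ℕ} (hf : X ^ n ∣ f) : X ^ (n + 1) ∣ f - compose f g := by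
  refine X_pow_dvd_iff.mpr fun d hd => ?_
  rcases Nat.lt_succ_iff_lt_or_eq.mp hd with hd | rfl
  · rw [map_sub, X_pow_dvd_iff.mp hf d hd, X_pow_dvd_iff.mp (X_pow_dvd_compose hf g) d hd,
      sub_zero]
  · rw [map_sub, coeff_compose_of_X_pow_dvd hg₀ hf, hg₁, one_pow, mul_one, sub_self]

lemma X_pow_succ_dvd_Phi {φ : PowerSeries F} (h0 : constantCoeff φ = 0) (h1 : coeff 1 φ = 1)
    (m : ℕ) : X ^ (m + 1) ∣ Phi φ m := by
  induction m with
  | zero => simp [Phi, iterComp]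
  | succ m ih => rw [Phi_succ]; exact X_pow_succ_dvd_sub_compose h0 h1 ih

end PowerSeries

theorem Phi_eq_sum_comp_general {F : Type*} [Field F] (φ : PowerSeries F)
    (h0 : constantCoeff φ = 0) (h1 : coeff 1 φ = 1) (m₀ : ℕ) :
    (∀ d : ℕ, ∃ M : ℕ, ∀ m ≥ M,
        coeff d (PowerSeries.compose (PowerSeries.Phi φ m) φ) = 0) ∧
      (∀ d M : ℕ, (∀ m > M, coeff d (PowerSeries.compose (PowerSeries.Phi φ m) φ) = 0) →
        coeff d (PowerSeries.Phi φ m₀) =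
          ∑ m ∈ Finset.Icc m₀ M, coeff d (PowerSeries.compose (PowerSeries.Phi φ m) φ)) := by
  have hvanish : ∀ d m, d ≤ m → coeff d (Phi φ m) = 0 := fun d m hdm =>
    X_pow_dvd_iff.mp (X_pow_succ_dvd_Phi h0 h1 m) d (by omega)
  have hdiff : ∀ d m,
      coeff d (compose (Phi φ m) φ) = coeff d (Phi φ m) - coeff d (Phi φ (m + 1)) := fun d m => by
    rw [Phi_succ, map_sub, sub_sub_cancel]
  refine ⟨fun d => ⟨d, fun m hm => ?_⟩, fun d M hM => ?_⟩
  · rw [hdiff, hvanish d m hm, hvanish d (m + 1) (by omega), sub_zero]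
  · simp_rw [hdiff] at hM ⊢
    refine eq_sum_Icc_sub_succ (f := fun m => coeff d (Phi φ m)) (fun m hm => ?_) m₀
    exact eq_zero_of_succ_eq_of_eventually_eq_zero
      (fun n hn => (sub_eq_zero.mp (hM n hn)).symm) (hvanish d) hm

/-- for any `m₀ ≥ 0`, `Φ_{m₀}(x) = ∑_{m=m₀}^∞ Φ_m(φ(x))`, the series
converging coefficientwise: for each degree `d` all but finitely many terms have zero
`d`-th coefficient, and the `d`-th coefficient of `Φ_{m₀}` is the (finite) sum. -/
theorem Phi_eq_sum_comp {F : Type*} [Field F] [CharZero F] (φ : PowerSeries F)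
    (h0 : constantCoeff φ = 0) (h1 : coeff 1 φ = 1) (m₀ : ℕ) :
    (∀ d : ℕ, ∃ M : ℕ, ∀ m ≥ M,
        coeff d (PowerSeries.compose (PowerSeries.Phi φ m) φ) = 0) ∧
      (∀ d M : ℕ, (∀ m > M, coeff d (PowerSeries.compose (PowerSeries.Phi φ m) φ) = 0) →
        coeff d (PowerSeries.Phi φ m₀) =
          ∑ m ∈ Finset.Icc m₀ M, coeff d (PowerSeries.compose (PowerSeries.Phi φ m) φ)) :=
  Phi_eq_sum_comp_general φ h0 h1 m₀
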